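/- arXiv:1012.1190 — 5 statements merged into one kernel-verified Lean document; each statement's English description precedes it below -/
import Mathlib

section
/- Let K be an algebraically closed field, I an ideal of K[x_1,...,x_n], and U a polynomial. Then every point of the zero set of the saturation I : U^∞ is a zero of the ideal of polynomials vanishing on Zero(I) \ Zero(U); equivalently, Zero(I : U^∞) ⊆ closure of Zero(I) \ Zero(U) in the Zariski topology. -/
open MvPolynomial

/-- The common zero set of a set of polynomials. -/
def zeroSet {K : Type*} [CommSemiring K] {n : ℕ} (S : Set (MvPolynomial (Fin n) K)) :
    Set (Fin n → K) :=
  {x | ∀ f ∈ S, MvPolynomial.eval x f = 0}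

/-- The Zariski closure of a set `S ⊆ K^n`. -/
def zariskiClosure {K : Type*} [CommSemiring K] {n : ℕ} (S : Set (Fin n → K)) :
    Set (Fin n → K) :=
  zeroSet {f : MvPolynomial (Fin n) K | ∀ x ∈ S, MvPolynomial.eval x f = 0}

theorem eval_eq_zero_of_mul_mem_radical {K : Type*} [CommSemiring K] [NoZeroDivisors K] {n : ℕ}
    {I : Ideal (MvPolynomial (Fin n) K)} {U f : MvPolynomial (Fin n) K} {x : Fin n → K}
    (hx : x ∈ zeroSet {g : MvPolynomial (Fin n) K | ∃ m > 0, U ^ m * g ∈ I})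
    (hUf : U * f ∈ I.radical) : eval x f = 0 := by
  obtain ⟨k, hk⟩ := hUf
  have hsat : U ^ (k + 1) * f ^ (k + 1) ∈ I := by
    rw [← mul_pow, pow_succ]
    exact I.mul_mem_right _ hk
  have hfx : eval x f ^ (k + 1) = 0 := by
    rw [← map_pow]
    exact hx _ ⟨k + 1, k.succ_pos, hsat⟩
  exact pow_eq_zero_iff k.succ_ne_zero |>.mp hfx

theorem mul_mem_vanishingIdeal_zeroLocus {k K σ : Type*} [Field k] [Field K] [Algebra k K]
    {I : Ideal (MvPolynomial σ k)} {U f : MvPolynomial σ k}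
    (hf : ∀ x ∈ zeroLocus K I, aeval x U ≠ 0 → aeval x f = 0) :
    U * f ∈ vanishingIdeal k (zeroLocus K I) := by
  intro x hx
  rw [map_mul]
  by_cases hU : aeval x U = 0
  · rw [hU, zero_mul]
  · rw [hf x hx hU, mul_zero]

/-- Over an algebraically closed field, `Zero(I : U^∞)` is contained in the Zariski
closure of `Zero(I) \ Zero(U)`. -/
theorem zeroSet_saturation_subset_closure {K : Type*} [Field K] [IsAlgClosed K] {n : ℕ}
    (I : Ideal (MvPolynomial (Fin n) K)) (U : MvPolynomial (Fin n) K) :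
    zeroSet {g : MvPolynomial (Fin n) K | ∃ m > 0, U ^ m * g ∈ I} ⊆
      zariskiClosure {x : Fin n → K |
        (∀ g ∈ I, MvPolynomial.eval x g = 0) ∧ MvPolynomial.eval x U ≠ 0} := by
  intro x hx f hf
  have hUf : U * f ∈ vanishingIdeal K (zeroLocus K I) :=
    mul_mem_vanishingIdeal_zeroLocus fun y hy hU => hf y ⟨mem_zeroLocus_iff.mp hy, hU⟩
  rw [vanishingIdeal_zeroLocus_eq_radical] at hUf
  exact eval_eq_zero_of_mul_mem_radical hx hUf
end

section
/- Let T = [f] be a triangular set consisting of a single nonconstant polynomial f in K[x_1,...,x_n] over an algebraically closed field K, with initial I_f = ini(f). Then Zero(sat(T)) = Zero(Ideal(f) : I_f^∞) equals the Zariski closure of the set of zeros of f where I_f does not vanish. -/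
open MvPolynomial

/-- The leading coefficient (initial) of `f` viewed as a polynomial in the variable `x_k`. -/
noncomputable def leadCoeffWrt {K : Type*} [CommSemiring K] {n : ℕ}
    (k : Fin n) (f : MvPolynomial (Fin n) K) : MvPolynomial (Fin n) K :=
  ∑ m ∈ f.support.filter (fun m => m k = f.degreeOf k),
    MvPolynomial.monomial (m.erase k) (MvPolynomial.coeff m f)

/-
Write `h` for the initial of `f` and `S` for the zeros of `f` off `h = 0`. Every `g` in the
saturation satisfies `h^m g ∈ (f)`, hence vanishes on `S`; as the zero set of the saturation is
Zariski closed, it contains the closure of `S`. Conversely, if `p` vanishes on `S` then `h p`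
vanishes on all zeros of `f`, so by the Nullstellensatz `(h p)^N ∈ (f)`: thus `p^N` lies in the
saturation and `p` vanishes on its zero set.
-/

def saturation {R σ : Type*} [CommSemiring R] (f h : MvPolynomial σ R) : Set (MvPolynomial σ R) :=
  {g | ∃ m : ℕ, h ^ m * g ∈ Ideal.span {f}}

section Semiring

variable {K : Type*} [CommSemiring K] {n : ℕ}

theorem zariskiClosure_subset_zeroSet {S : Set (Fin n → K)} {T : Set (MvPolynomial (Fin n) K)}
    (hST : S ⊆ zeroSet T) : zariskiClosure S ⊆ zeroSet T :=
  fun _ hx g hg => hx g fun _ hy => hST hy g hg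

theorem eval_eq_zero_of_mem_saturation [NoZeroDivisors K] {f h g : MvPolynomial (Fin n) K}
    (hg : g ∈ saturation f h) {y : Fin n → K} (hfy : eval y f = 0) (hhy : eval y h ≠ 0) :
    eval y g = 0 := by
  obtain ⟨m, hm⟩ := hg
  obtain ⟨q, hq⟩ := Ideal.mem_span_singleton'.mp hm
  have hprod : eval y h ^ m * eval y g = 0 := by
    rw [← map_pow, ← map_mul, ← hq, map_mul, hfy, mul_zero]
  exact (mul_eq_zero.mp hprod).resolve_left (pow_ne_zero m hhy)

end Semiring

section AlgClosed

variable {K : Type*} [Field K] [IsAlgClosed K] {n : ℕ}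

theorem mul_mem_radical_span_of_eval_eq_zero {f h p : MvPolynomial (Fin n) K}
    (hp : ∀ y, eval y f = 0 → eval y h ≠ 0 → eval y p = 0) :
    h * p ∈ (Ideal.span {f}).radical := by
  rw [← vanishingIdeal_zeroLocus_eq_radical (K := K), mem_vanishingIdeal_iff]
  intro y hy
  have hfy : eval y f = 0 := hy f (Ideal.mem_span_singleton_self f)
  change eval y (h * p) = 0
  by_cases hhy : eval y h = 0
  · rw [map_mul, hhy, zero_mul]
  · rw [map_mul, hp y hfy hhy, mul_zero]

theorem zeroSet_saturation_eq_zariskiClosure (f h : MvPolynomial (Fin n) K) :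
    zeroSet (saturation f h) = zariskiClosure {x | eval x f = 0 ∧ eval x h ≠ 0} := by
  refine subset_antisymm (fun x hx p hp => ?_) (zariskiClosure_subset_zeroSet ?_)
  · obtain ⟨N, hN⟩ := mul_mem_radical_span_of_eval_eq_zero fun y hfy hhy => hp y ⟨hfy, hhy⟩
    have hpN : p ^ N ∈ saturation f h := ⟨N, by rwa [← mul_pow]⟩
    exact pow_eq_zero_iff'.mp (by simpa only [map_pow] using hx _ hpN) |>.1
  · exact fun y ⟨hfy, hhy⟩ g hg => eval_eq_zero_of_mem_saturation hg hfy hhy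

end AlgClosed

theorem zeroSet_sat_single_general {K : Type*} [Field K] [IsAlgClosed K] {n : ℕ}
    (f : MvPolynomial (Fin n) K) (k : Fin n) :
    zeroSet {g : MvPolynomial (Fin n) K |
        ∃ m : ℕ, leadCoeffWrt k f ^ m * g ∈ Ideal.span {f}} =
      zariskiClosure {x : Fin n → K |
        MvPolynomial.eval x f = 0 ∧ MvPolynomial.eval x (leadCoeffWrt k f) ≠ 0} :=
  zeroSet_saturation_eq_zariskiClosure f (leadCoeffWrt k f)

/-- For a triangular set `T = [f]` consisting of a single nonconstant polynomial with
leading variable `x_k` and initial `ini(f)`, the zero set of `sat(T) = (f) : ini(f)^∞`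
equals the Zariski closure of the zeros of `f` where `ini(f)` does not vanish. -/
theorem zeroSet_sat_single {K : Type*} [Field K] [IsAlgClosed K] [CharZero K] {n : ℕ}
    (f : MvPolynomial (Fin n) K) (k : Fin n)
    (hnonconst : 0 < f.degreeOf k)
    (hcls : ∀ j, k < j → f.degreeOf j = 0) :
    zeroSet {g : MvPolynomial (Fin n) K |
        ∃ m : ℕ, leadCoeffWrt k f ^ m * g ∈ Ideal.span {f}} =
      zariskiClosure {x : Fin n → K |
        MvPolynomial.eval x f = 0 ∧ MvPolynomial.eval x (leadCoeffWrt k f) ≠ 0} :=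
  zeroSet_sat_single_general f k
end

section
/- Let K be an algebraically closed field, I an ideal of K[x_1,...,x_n] and U a polynomial such that U vanishes nowhere on Zero(I) (i.e., Zero(I) ∩ Zero(U) = ∅). Then Zero(I : U^∞) = Zero(I). -/
open MvPolynomial

/-- Over an algebraically closed field, if `U` vanishes nowhere on `Zero(I)`, then
`Zero(I : U^∞) = Zero(I)`. -/
theorem zeroSet_saturation_eq_of_disjoint {K : Type*} [Field K] [IsAlgClosed K] {n : ℕ}
    (I : Ideal (MvPolynomial (Fin n) K)) (U : MvPolynomial (Fin n) K)
    (h : ∀ x : Fin n → K, (∀ g ∈ I, MvPolynomial.eval x g = 0) →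
      MvPolynomial.eval x U ≠ 0) :
    zeroSet {g : MvPolynomial (Fin n) K | ∃ m : ℕ, U ^ m * g ∈ I} =
      zeroSet (I : Set (MvPolynomial (Fin n) K)) := by
  ext x
  constructor
  · intro hx g hg
    exact hx g ⟨0, by simpa using hg⟩
  · intro hx g ⟨m, hm⟩
    have h0 := hx _ hm
    rw [map_mul, map_pow] at h0
    exact (mul_eq_zero.mp h0).resolve_left (pow_ne_zero m (h x hx))
end

section
/- Let K be a field, P a finite set of polynomials, and T a Wu characteristic set of P, meaning T ⊆ Ideal(P) and prem(p, T) = 0 for all p ∈ P. Then Zero(P) ⊆ Zero(T) and Zero(T / ini(T)) ⊆ Zero(P); in particular Zero(P) = Zero(T/ini(T)) ∪ ∪_{i} Zero(P ∪ T ∪ {ini(f_i)}). -/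
open MvPolynomial

/-- Basic properties of a Wu characteristic set `T = [f_1,...,f_s]` of a finite set `P`:
`Zero(P) ⊆ Zero(T)`, `Zero(T/ini(T)) ⊆ Zero(P)`, and the zero decomposition
`Zero(P) = Zero(T/ini(T)) ∪ ⋃_i Zero(P ∪ T ∪ {ini(f_i)})`. -/
theorem wu_characteristic_set_zero_decomposition {K : Type*} [Field K] {n s : ℕ}
    (P : Finset (MvPolynomial (Fin n) K))
    (f : Fin s → MvPolynomial (Fin n) K) (c : Fin s → Fin n)
    (hmono : StrictMono c)
    (hnonconst : ∀ i, 0 < (f i).degreeOf (c i))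
    (hcls : ∀ i k, c i < k → (f i).degreeOf k = 0)
    (hTP : ∀ i, f i ∈ Ideal.span (P : Set (MvPolynomial (Fin n) K)))
    (hprem : ∀ p ∈ P, ∃ (d : Fin s → ℕ) (q : Fin s → MvPolynomial (Fin n) K),
      (∏ i, leadCoeffWrt (c i) (f i) ^ d i) * p = ∑ i, q i * f i) :
    zeroSet (P : Set (MvPolynomial (Fin n) K)) ⊆ zeroSet (Set.range f) ∧
    {x : Fin n → K | (∀ i, MvPolynomial.eval x (f i) = 0) ∧
        ∀ i, MvPolynomial.eval x (leadCoeffWrt (c i) (f i)) ≠ 0} ⊆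
      zeroSet (P : Set (MvPolynomial (Fin n) K)) ∧
    zeroSet (P : Set (MvPolynomial (Fin n) K)) =
      {x : Fin n → K | (∀ i, MvPolynomial.eval x (f i) = 0) ∧
        ∀ i, MvPolynomial.eval x (leadCoeffWrt (c i) (f i)) ≠ 0} ∪
      ⋃ i : Fin s, zeroSet ((P : Set (MvPolynomial (Fin n) K)) ∪ Set.range f ∪
        {leadCoeffWrt (c i) (f i)}) := by

  have h1 : zeroSet (P : Set (MvPolynomial (Fin n) K)) ⊆ zeroSet (Set.range f) := by
    intro x hx g hg
    obtain ⟨i, rfl⟩ := hg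
    have hker : Ideal.span (P : Set (MvPolynomial (Fin n) K)) ≤
        RingHom.ker (MvPolynomial.eval x) := by
      rw [Ideal.span_le]
      intro p hp
      exact hx p hp
    exact hker (hTP i)
  have h2 : {x : Fin n → K | (∀ i, MvPolynomial.eval x (f i) = 0) ∧
        ∀ i, MvPolynomial.eval x (leadCoeffWrt (c i) (f i)) ≠ 0} ⊆
      zeroSet (P : Set (MvPolynomial (Fin n) K)) := by
    rintro x ⟨hf, hini⟩ p hp
    obtain ⟨d, q, heq⟩ := hprem p hp
    have := congrArg (MvPolynomial.eval x) heq
    simp only [map_mul, map_prod, map_pow, map_sum, hf, mul_zero, Finset.sum_const_zero] at this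
    have hne : (∏ i, MvPolynomial.eval x (leadCoeffWrt (c i) (f i)) ^ d i) ≠ 0 :=
      Finset.prod_ne_zero_iff.2 fun i _ => pow_ne_zero _ (hini i)
    exact (mul_eq_zero.1 this).resolve_left hne
  refine ⟨h1, h2, le_antisymm ?_ ?_⟩
  · intro x hx
    by_cases h : ∀ i, MvPolynomial.eval x (leadCoeffWrt (c i) (f i)) ≠ 0
    · exact Or.inl ⟨fun i => h1 hx _ ⟨i, rfl⟩, h⟩
    · push_neg at h
      obtain ⟨i, hi⟩ := h
      refine Or.inr (Set.mem_iUnion.2 ⟨i, ?_⟩)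
      intro g hg
      rcases hg with (hg | hg) | hg
      · exact hx g hg
      · exact h1 hx g hg
      · rw [Set.mem_singleton_iff.1 hg]; exact hi
  · rintro x (hx | hx)
    · exact h2 hx
    · obtain ⟨i, hi⟩ := Set.mem_iUnion.1 hx
      intro p hp
      exact hi p (Or.inl (Or.inl hp))
end

section
/- Let K be an algebraically closed field, I an ideal of K[x_1,...,x_n], and U, V polynomials such that Zero(I) ∩ Zero(U) ⊆ Zero(I) ∩ Zero(V). Then Zero(I : V^∞) ⊆ Zero(I : U^∞). -/
open MvPolynomial

theorem mem_radical_of_forall_mem_zeroSet_eval_eq_zero {K : Type*} [Field K] [IsAlgClosed K]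
    {n : ℕ} {I : Ideal (MvPolynomial (Fin n) K)} {p : MvPolynomial (Fin n) K}
    (hp : ∀ x ∈ zeroSet (I : Set (MvPolynomial (Fin n) K)), eval x p = 0) : p ∈ I.radical := by
  rw [← vanishingIdeal_zeroLocus_eq_radical (K := K), mem_vanishingIdeal_iff]
  -- `zeroLocus K I` and `aeval` unfold to `zeroSet ↑I` and `eval`.
  exact hp

theorem eval_mul_eq_zero_of_pow_mul_mem {K : Type*} [CommSemiring K] [NoZeroDivisors K] {n : ℕ}
    {I : Ideal (MvPolynomial (Fin n) K)} {U V f : MvPolynomial (Fin n) K} {m : ℕ}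
    (h : zeroSet (I : Set (MvPolynomial (Fin n) K)) ∩ zeroSet {U} ⊆
      zeroSet (I : Set (MvPolynomial (Fin n) K)) ∩ zeroSet {V})
    (hm : U ^ m * f ∈ I) {x : Fin n → K} (hx : x ∈ zeroSet (I : Set (MvPolynomial (Fin n) K))) :
    eval x (V * f) = 0 := by
  by_cases hU : eval x U = 0
  · have hV : eval x V = 0 := (h ⟨hx, by simpa [zeroSet] using hU⟩).2 V rfl
    rw [map_mul, hV, zero_mul]
  · have hUf : eval x U ^ m * eval x f = 0 := by simpa using hx _ hm
    rw [map_mul, (mul_eq_zero.mp hUf).resolve_left (pow_ne_zero m hU), mul_zero]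

/-- If `Zero(I) ∩ Zero(U) ⊆ Zero(I) ∩ Zero(V)`, then
`Zero(I : V^∞) ⊆ Zero(I : U^∞)` over an algebraically closed field. -/
theorem zeroSet_saturation_antitone {K : Type*} [Field K] [IsAlgClosed K] {n : ℕ}
    (I : Ideal (MvPolynomial (Fin n) K)) (U V : MvPolynomial (Fin n) K)
    (h : zeroSet (I : Set (MvPolynomial (Fin n) K)) ∩ zeroSet {U} ⊆
      zeroSet (I : Set (MvPolynomial (Fin n) K)) ∩ zeroSet {V}) :
    zeroSet {g : MvPolynomial (Fin n) K | ∃ m : ℕ, V ^ m * g ∈ I} ⊆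
      zeroSet {g : MvPolynomial (Fin n) K | ∃ m : ℕ, U ^ m * g ∈ I} := by
  rintro x hx f ⟨m, hm⟩
  have hVf : V * f ∈ I.radical :=
    mem_radical_of_forall_mem_zeroSet_eval_eq_zero fun y hy =>
      eval_mul_eq_zero_of_pow_mul_mem h hm hy
  obtain ⟨k, hk⟩ := Ideal.mem_radical_iff.mp hVf
  have hfk : eval x (f ^ k) = 0 := hx _ ⟨k, by rwa [← mul_pow]⟩
  exact eq_zero_of_pow_eq_zero (by rwa [map_pow] at hfk)
end
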